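/- arXiv:1811.00844 — 6 statements merged into one kernel-verified Lean document; each statement's English description precedes it below -/
import Mathlib

section
/- Let 2μ ≤ β ≤ α be positive reals and let n be a positive integer with μn, βn, αn integers. Let G be a graph on αn vertices such that between any two disjoint sets of μn vertices there is at least one edge. Then between any two disjoint sets of βn vertices there are at least (β²/(2μ))·n edges. -/
/-!
Fix `X` and write `d(y)` for the number of neighbours of `y` in `X`. If `T ⊆ Y` has `μn` vertices,
fewer than `μn` vertices of `X` have no neighbour in `T`, so `∑_{y ∈ T} d(y) ≥ |X| + 1 - μn` and some
`y ∈ T` has `μn · d(y) ≥ |X| + 1 - μn`. Deleting such vertices from `Y` one at a time until `μn`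
are left gives `μn · e(X, Y) ≥ |Y| (|X| + 1 - μn)`, and for `|X| = |Y| = βn ≥ 2μn` the right-hand
side is at least `(βn)² / 2`.
-/

open Finset

namespace Rel

variable {α β : Type*}

def InteredgesNonemptyOfCard (r : α → β → Prop) [∀ a, DecidablePred (r a)] (m : ℕ)
    (X : Finset α) (Y : Finset β) : Prop :=
  ∀ U ⊆ X, ∀ T ⊆ Y, #U = m → #T = m → (interedges r U T).Nonempty

variable {r : α → β → Prop} [∀ a, DecidablePred (r a)] {m : ℕ} {X : Finset α} {Y T : Finset β}

namespace InteredgesNonemptyOfCard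

theorem mono_right (h : InteredgesNonemptyOfCard r m X Y) (hT : T ⊆ Y) :
    InteredgesNonemptyOfCard r m X T :=
  fun U hU T' hT' => h U hU T' (hT'.trans hT)

theorem pos (h : InteredgesNonemptyOfCard r m X Y) : 0 < m := by
  refine Nat.pos_of_ne_zero fun hm => ?_
  subst hm
  simpa [interedges_empty_left] using h ∅ (empty_subset X) ∅ (empty_subset Y) card_empty card_empty

end InteredgesNonemptyOfCard

theorem card_interedges_eq_sum_card_filter (X : Finset α) (Y : Finset β) :
    #(interedges r X Y) = ∑ y ∈ Y, #{x ∈ X | r x y} := by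
  rw [interedges, card_filter, sum_product_right]
  simp only [card_filter]

theorem card_add_one_sub_le_sum_card_filter (h : InteredgesNonemptyOfCard r m X Y)
    (hTY : T ⊆ Y) (hT : #T = m) :
    #X + 1 - m ≤ ∑ y ∈ T, #{x ∈ X | r x y} := by
  classical
  set N := T.biUnion fun y => X.filter (r · y)
  have hmiss : #(X \ N) < m := by
    by_contra! hle
    obtain ⟨U, hU, hUm⟩ := exists_subset_card_eq hle
    obtain ⟨⟨x, y⟩, hedge⟩ := h U (hU.trans sdiff_subset) T hTY hUm hT
    obtain ⟨hxU, hyT, hxy⟩ := mk_mem_interedges_iff.mp hedge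
    obtain ⟨hxX, hxN⟩ := mem_sdiff.mp (hU hxU)
    exact hxN (mem_biUnion.mpr ⟨y, hyT, mem_filter.mpr ⟨hxX, hxy⟩⟩)
  have hN : #N ≤ ∑ y ∈ T, #{x ∈ X | r x y} := card_biUnion_le
  have := card_le_card_sdiff_add_card (s := X) (t := N)
  omega

theorem exists_card_add_one_sub_le_mul_card_filter (h : InteredgesNonemptyOfCard r m X Y)
    (hm : m ≤ #Y) : ∃ y ∈ Y, #X + 1 - m ≤ m * #{x ∈ X | r x y} := by
  obtain ⟨T, hTY, hT⟩ := exists_subset_card_eq hm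
  have hTne : T.Nonempty := card_pos.mp (hT ▸ h.pos)
  obtain ⟨y, hyT, hmax⟩ := exists_max_image T (fun y => #{x ∈ X | r x y}) hTne
  refine ⟨y, hTY hyT, ?_⟩
  calc #X + 1 - m ≤ ∑ z ∈ T, #{x ∈ X | r x z} := card_add_one_sub_le_sum_card_filter h hTY hT
    _ ≤ ∑ _z ∈ T, #{x ∈ X | r x y} := sum_le_sum hmax
    _ = m * #{x ∈ X | r x y} := by rw [sum_const, hT, smul_eq_mul]

theorem card_mul_le_mul_card_interedges (h : InteredgesNonemptyOfCard r m X Y) (hm : m ≤ #Y) :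
    #Y * (#X + 1 - m) ≤ m * #(interedges r X Y) := by
  classical
  induction hk : #Y using Nat.strong_induction_on generalizing Y with
  | _ k ih =>
  rw [card_interedges_eq_sum_card_filter]
  obtain hmY | hmY := hm.eq_or_lt
  · rw [← hk, ← hmY]
    exact Nat.mul_le_mul_left m (card_add_one_sub_le_sum_card_filter h subset_rfl hmY.symm)
  · obtain ⟨j, rfl⟩ : ∃ j, k = j + 1 := ⟨k - 1, by omega⟩
    obtain ⟨y, hy, hdy⟩ := exists_card_add_one_sub_le_mul_card_filter h hm
    have hcard : #(Y.erase y) = j := by rw [card_erase_of_mem hy, hk, Nat.add_sub_cancel]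
    have hrest := ih j (by omega) (h.mono_right (erase_subset y Y)) (by omega) hcard
    rw [card_interedges_eq_sum_card_filter] at hrest
    rw [← add_sum_erase Y _ hy, mul_add]
    calc (j + 1) * (#X + 1 - m) = (#X + 1 - m) + j * (#X + 1 - m) := by ring
      _ ≤ _ := Nat.add_le_add hdy hrest

theorem sq_card_le_two_mul_mul_card_interedges (h : InteredgesNonemptyOfCard r m X Y)
    (hXY : #X = #Y) (hm : 2 * m ≤ #Y) :
    #Y ^ 2 ≤ 2 * m * #(interedges r X Y) := by
  have hmain := card_mul_le_mul_card_interedges h (by omega)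
  rw [hXY] at hmain
  calc #Y ^ 2 = #Y * #Y := sq _
    _ ≤ #Y * (2 * (#Y + 1 - m)) := Nat.mul_le_mul_left _ (by omega)
    _ = 2 * (#Y * (#Y + 1 - m)) := by ring
    _ ≤ 2 * m * #(interedges r X Y) := by rw [mul_assoc]; exact Nat.mul_le_mul_left 2 hmain

end Rel

theorem stmt1_general {V : Type*} (G : SimpleGraph V)
    [DecidableRel G.Adj] (μ β : ℝ) (n : ℕ)
    (hμβ : 2 * μ ≤ β)
    (mn bn : ℕ) (hmn : (mn : ℝ) = μ * n) (hbn : (bn : ℝ) = β * n)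
    (hyp : ∀ X Y : Finset V, Disjoint X Y → X.card = mn → Y.card = mn →
      0 < (Rel.interedges G.Adj X Y).card) :
    ∀ X Y : Finset V, Disjoint X Y → X.card = bn → Y.card = bn →
      β ^ 2 / (2 * μ) * n ≤ ((Rel.interedges G.Adj X Y).card : ℝ) := by
  intro X Y hXY hX hY
  have hdense : Rel.InteredgesNonemptyOfCard G.Adj mn X Y := fun U hU T hT hUm hTm =>
    card_pos.mp (hyp U T (hXY.mono hU hT) hUm hTm)
  have hmn_pos : (0 : ℝ) < mn := Nat.cast_pos.mpr hdense.pos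
  have hμn : 0 < μ * n := hmn ▸ hmn_pos
  have h2mb : 2 * mn ≤ bn := by
    have : 2 * μ * n ≤ β * n := mul_le_mul_of_nonneg_right hμβ n.cast_nonneg
    exact_mod_cast (show (2 * mn : ℝ) ≤ bn by rw [hmn, hbn]; linarith)
  have hsq := Rel.sq_card_le_two_mul_mul_card_interedges hdense (hX.trans hY.symm) (hY ▸ h2mb)
  have hrewrite : β ^ 2 / (2 * μ) * n = (bn : ℝ) ^ 2 / (2 * mn) := by
    rw [hmn, hbn]
    field_simp [left_ne_zero_of_mul hμn.ne', right_ne_zero_of_mul hμn.ne']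
  rw [hrewrite, div_le_iff₀ (by positivity : (0 : ℝ) < 2 * mn), ← hY]
  exact_mod_cast hsq.trans_eq (mul_comm _ _)

/-- If `G` on `αn` vertices has an edge between any two disjoint
sets of `μn` vertices, then between any two disjoint sets of `βn` vertices there
are at least `(β²/(2μ))·n` edges (here `2μ ≤ β ≤ α`). -/
theorem stmt1 {V : Type*} [Fintype V] [DecidableEq V] (G : SimpleGraph V)
    [DecidableRel G.Adj] (μ β α : ℝ) (n : ℕ) (hn : 0 < n)
    (hμ : 0 < μ) (hμβ : 2 * μ ≤ β) (hβα : β ≤ α)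
    (mn bn an : ℕ) (hmn : (mn : ℝ) = μ * n) (hbn : (bn : ℝ) = β * n)
    (han : (an : ℝ) = α * n) (hV : Fintype.card V = an)
    (hyp : ∀ X Y : Finset V, Disjoint X Y → X.card = mn → Y.card = mn →
      0 < (Rel.interedges G.Adj X Y).card) :
    ∀ X Y : Finset V, Disjoint X Y → X.card = bn → Y.card = bn →
      β ^ 2 / (2 * μ) * n ≤ ((Rel.interedges G.Adj X Y).card : ℝ) :=
  stmt1_general G μ β n hμβ mn bn hmn hbn hyp
end

section
/- Let k ≥ 1 and let G be a balanced bipartite graph with x vertices in each vertex class. If G contains no copy of the complete bipartite graph K_{2k,2k} (with one side in each class), then G has at most 4·x^{2−1/(2k)} edges. -/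
open scoped Classical

open Finset Function

/-!
Kővári–Sós–Turán by double counting. With `d b` the degree of a right vertex `b`, `∑ d b ^ n`
counts pairs `(f, b)` with `f : Fin n → α` and `b` adjacent to every `f i`. An injective `f`
has fewer than `n` such `b`, or its image and those `b` would span a `K_{n,n}`; the at most
`n² x^(n-1)` non-injective `f` contribute at most `x` each. Hence `∑ d b ^ n ≤ 4ⁿ xⁿ`, and the
power-mean inequality `(∑ d b)ⁿ ≤ x^(n-1) ∑ d b ^ n` bounds the number `e = ∑ d b` of edges by
`eⁿ ≤ 4ⁿ x^(2n-1)`.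
-/

variable {α β : Type*}

lemma card_filter_apply_eq_apply_le [Fintype α] {m : ℕ} {i j : Fin (m + 1)}
    (hij : i ≠ j) :
    #{f : Fin (m + 1) → α | f i = f j} ≤ Fintype.card α ^ m := by
  rw [← Fintype.card_pi_const, ← card_univ]
  refine card_le_card_of_injOn (· ∘ j.succAbove) (fun _ _ ↦ mem_coe.2 (mem_univ _)) ?_
  intro f hf g hg hfg
  simp only [coe_filter, mem_univ, true_and, Set.mem_ofPred_eq] at hf hg
  have hsucc (t : Fin m) : f (j.succAbove t) = g (j.succAbove t) := congrFun hfg t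
  obtain ⟨i', rfl⟩ := Fin.exists_succAbove_eq hij
  funext t
  rcases eq_or_ne t j with rfl | ht
  · rw [← hf, ← hg, hsucc]
  · obtain ⟨t', rfl⟩ := Fin.exists_succAbove_eq ht
    exact hsucc t'

lemma card_filter_not_injective_le [Fintype α] (m : ℕ) :
    #{f : Fin (m + 1) → α | ¬Injective f} ≤ (m + 1) ^ 2 * Fintype.card α ^ m := by
  have hsub : ({f | ¬Injective f} : Finset (Fin (m + 1) → α)) ⊆
      (univ : Finset (Fin (m + 1))).offDiag.biUnion
        fun p ↦ ({f | f p.1 = f p.2} : Finset (Fin (m + 1) → α)) := by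
    intro f hf
    simp only [mem_filter, mem_univ, true_and, Injective, not_forall] at hf
    obtain ⟨i, j, hfij, hij⟩ := hf
    exact mem_biUnion.2 ⟨(i, j), by simp [hij], by simp [hfij]⟩
  calc _ ≤ _ := card_le_card hsub
    _ ≤ ∑ p ∈ (univ : Finset (Fin (m + 1))).offDiag, #{f : Fin (m + 1) → α | f p.1 = f p.2} :=
      card_biUnion_le
    _ ≤ #(univ : Finset (Fin (m + 1))).offDiag • Fintype.card α ^ m :=
      sum_le_card_nsmul _ _ _ fun p hp ↦ card_filter_apply_eq_apply_le (mem_offDiag.1 hp).2.2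
    _ ≤ (m + 1) ^ 2 * Fintype.card α ^ m := by
      rw [smul_eq_mul, offDiag_card, card_univ, Fintype.card_fin, sq]
      gcongr
      exact Nat.sub_le _ _

lemma sum_card_filter_pow_eq [Fintype α] [Fintype β] (r : α → β → Prop) (n : ℕ) :
    ∑ b, #{a | r a b} ^ n = ∑ f : Fin n → α, #{b | ∀ i, r (f i) b} := by
  have hpow (b : β) : #{a | r a b} ^ n = #{f : Fin n → α | ∀ i, r (f i) b} := by
    rw [← Fintype.card_piFinset_const]
    congr 1
    ext f
    simp [Fintype.mem_piFinset]
  simp_rw [hpow, card_filter]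
  exact sum_comm

lemma card_filter_forall_lt_of_injective [Fintype β] {n : ℕ} {r : α → β → Prop}
    (hfree : ¬ ∃ (S : Finset α) (T : Finset β), #S = n ∧ #T = n ∧ ∀ a ∈ S, ∀ b ∈ T, r a b)
    {f : Fin n → α} (hf : Injective f) : #{b | ∀ i, r (f i) b} < n := by
  by_contra! h
  obtain ⟨T, hT, hTcard⟩ := exists_subset_card_eq h
  refine hfree ⟨univ.image f, T, by simp [card_image_of_injective _ hf], hTcard, ?_⟩
  simp only [mem_image, mem_univ, true_and, forall_exists_index, forall_apply_eq_imp_iff]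
  exact fun i b hb ↦ (mem_filter.1 (hT hb)).2 i

lemma sum_card_filter_pow_le [Fintype α] [Fintype β] {m : ℕ} {r : α → β → Prop}
    (hfree : ¬ ∃ (S : Finset α) (T : Finset β), #S = m + 1 ∧ #T = m + 1 ∧
      ∀ a ∈ S, ∀ b ∈ T, r a b) :
    ∑ b, #{a | r a b} ^ (m + 1) ≤
      Fintype.card α ^ (m + 1) * m + (m + 1) ^ 2 * Fintype.card α ^ m * Fintype.card β := by
  rw [sum_card_filter_pow_eq, ← sum_filter_add_sum_filter_not univ Injective]
  gcongr
  · calc _ ≤ #{f : Fin (m + 1) → α | Injective f} • m :=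
          sum_le_card_nsmul _ _ _ fun f hf ↦
            Nat.lt_succ_iff.1 (card_filter_forall_lt_of_injective hfree (mem_filter.1 hf).2)
      _ ≤ Fintype.card α ^ (m + 1) * m := by
          rw [smul_eq_mul, ← Fintype.card_pi_const]
          gcongr
          exact card_le_univ _
  · calc _ ≤ #{f : Fin (m + 1) → α | ¬Injective f} • Fintype.card β :=
          sum_le_card_nsmul _ _ _ fun f _ ↦ (card_filter_le _ _).trans_eq card_univ
      _ ≤ _ := by
          rw [smul_eq_mul]
          gcongr
          exact card_filter_not_injective_le m

lemma card_edgeFinset_eq_sum_card_filter_adj [Fintype α] [Fintype β]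
    (G : SimpleGraph (α ⊕ β))
    (hbip : ∀ u v, G.Adj u v → (u.isLeft ∧ v.isRight) ∨ (u.isRight ∧ v.isLeft)) :
    #G.edgeFinset = ∑ b, #{a | G.Adj (.inl a) (.inr b)} := by
  have hG : G.IsBipartiteWith ((univ.map .inl : Finset (α ⊕ β)) : Set (α ⊕ β))
      ((univ.map .inr : Finset (α ⊕ β)) : Set (α ⊕ β)) :=
    ⟨by simp [Set.disjoint_left], fun u v huv ↦ by
      have := hbip u v huv
      cases u <;> cases v <;> simp_all⟩
  rw [← SimpleGraph.isBipartiteWith_sum_degrees_eq_card_edges' hG, sum_map]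
  refine sum_congr rfl fun b _ ↦ ?_
  rw [← SimpleGraph.card_neighborFinset_eq_degree,
    SimpleGraph.isBipartiteWith_neighborFinset' hG (mem_map_of_mem _ (mem_univ b)),
    filter_map, card_map]
  rfl

lemma add_sq_le_four_pow (m : ℕ) : m + (m + 1) ^ 2 ≤ 4 ^ (m + 1) := by
  have h : m + 2 ≤ 2 ^ (m + 1) := Nat.lt_two_pow_self
  calc m + (m + 1) ^ 2 ≤ (m + 2) ^ 2 := by nlinarith
    _ ≤ (2 ^ (m + 1)) ^ 2 := by gcongr
    _ = 4 ^ (m + 1) := by rw [← pow_mul, mul_comm, pow_mul]; norm_num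

lemma le_mul_rpow_of_pow_le {E C x : ℝ} {n : ℕ} (hn : n ≠ 0) (hC : 0 ≤ C)
    (hx : 0 ≤ x) (h : E ^ n ≤ C ^ n * x ^ (2 * n - 1)) :
    E ≤ C * x ^ ((2 : ℝ) - 1 / n) := by
  refine le_of_pow_le_pow_left₀ hn (by positivity) ?_
  have hexp : ((2 : ℝ) - 1 / n) * n = ((2 * n - 1 : ℕ) : ℝ) := by
    have : (n : ℝ) ≠ 0 := by exact_mod_cast hn
    rw [Nat.cast_sub (by omega)]
    push_cast
    field_simp
  rwa [mul_pow, ← Real.rpow_natCast (x ^ _), ← Real.rpow_mul hx, hexp, Real.rpow_natCast]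

theorem card_edgeFinset_pow_le [Fintype α] (G : SimpleGraph (α ⊕ α))
    (hbip : ∀ u v, G.Adj u v → (u.isLeft ∧ v.isRight) ∨ (u.isRight ∧ v.isLeft)) {m : ℕ}
    (hfree : ¬ ∃ (S T : Finset α), #S = m + 1 ∧ #T = m + 1 ∧
      ∀ a ∈ S, ∀ b ∈ T, G.Adj (.inl a) (.inr b)) :
    #G.edgeFinset ^ (m + 1) ≤ 4 ^ (m + 1) * Fintype.card α ^ (2 * m + 1) := by
  set x := Fintype.card α
  calc #G.edgeFinset ^ (m + 1) = (∑ b, #{a | G.Adj (.inl a) (.inr b)}) ^ (m + 1) := by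
        rw [card_edgeFinset_eq_sum_card_filter_adj G hbip]
    _ ≤ x ^ m * ∑ b, #{a | G.Adj (.inl a) (.inr b)} ^ (m + 1) :=
        pow_sum_le_card_mul_sum_pow (fun _ _ ↦ Nat.zero_le _) m
    _ ≤ x ^ m * (x ^ (m + 1) * m + (m + 1) ^ 2 * x ^ m * x) := by
        gcongr
        exact sum_card_filter_pow_le hfree
    _ = (m + (m + 1) ^ 2) * x ^ (2 * m + 1) := by ring
    _ ≤ 4 ^ (m + 1) * x ^ (2 * m + 1) := by
        gcongr
        exact add_sq_le_four_pow m

theorem card_edgeFinset_le_four_mul_rpow [Fintype α] (G : SimpleGraph (α ⊕ α))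
    (hbip : ∀ u v, G.Adj u v → (u.isLeft ∧ v.isRight) ∨ (u.isRight ∧ v.isLeft)) {n : ℕ}
    (hn : n ≠ 0) (hfree : ¬ ∃ (S T : Finset α), #S = n ∧ #T = n ∧
      ∀ a ∈ S, ∀ b ∈ T, G.Adj (.inl a) (.inr b)) :
    (#G.edgeFinset : ℝ) ≤ 4 * (Fintype.card α : ℝ) ^ ((2 : ℝ) - 1 / n) := by
  obtain ⟨m, rfl⟩ := Nat.exists_eq_add_one_of_ne_zero hn
  refine le_mul_rpow_of_pow_le hn (by norm_num) (Nat.cast_nonneg _) ?_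
  rw [show 2 * (m + 1) - 1 = 2 * m + 1 by omega]
  exact_mod_cast card_edgeFinset_pow_le G hbip hfree

/-- Kővári–Sós–Turán. A balanced bipartite graph with `x` vertices in
each class and no copy of `K_{2k,2k}` (with one side in each class) has at most
`4·x^(2−1/(2k))` edges. -/
theorem stmt2 (k x : ℕ) (hk : 1 ≤ k) (G : SimpleGraph (Fin x ⊕ Fin x))
    (hbip : ∀ u v, G.Adj u v → (u.isLeft ∧ v.isRight) ∨ (u.isRight ∧ v.isLeft))
    (hfree : ¬ ∃ (S T : Finset (Fin x)), S.card = 2 * k ∧ T.card = 2 * k ∧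
      ∀ a ∈ S, ∀ b ∈ T, G.Adj (Sum.inl a) (Sum.inr b)) :
    (G.edgeFinset.card : ℝ) ≤ 4 * (x : ℝ) ^ ((2 : ℝ) - 1 / (2 * k)) := by
  simpa using card_edgeFinset_le_four_mul_rpow G hbip (n := 2 * k) (by omega) hfree
end

section
/- Let G be a graph, let k ≥ 1, and let t = k+1. If G contains a path on n vertices, then the sheared complete blow-up G^k{k+1} contains a copy of the k-th power of the path P_n^k. Here G^k{k+1} is any graph obtained from the complete blow-up G^k(k+1) by removing a perfect matching between the (k+1)-cliques C(u) and C(v) for every edge uv of G^k. -/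
/-- The `k`-th power of a graph: distinct vertices are adjacent iff they are joined
by a walk of length at most `k`. -/
def powGraph {V : Type*} (G : SimpleGraph V) (k : ℕ) : SimpleGraph V where
  Adj u v := u ≠ v ∧ ∃ w : G.Walk u v, w.length ≤ k
  symm := by
    refine ⟨?_⟩
    rintro u v ⟨h, w, hw⟩
    exact ⟨h.symm, w.reverse, by simpa using hw⟩
  loopless := by refine ⟨?_⟩; rintro u ⟨h, -⟩; exact h rfl

/-- A sheared complete blow-up `G{t}`: each vertex is replaced by a `t`-clique and
each edge `uv` of `G` by a complete bipartite graph minus the perfect matching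
determined by the bijection `σ u v`. -/
def shearedBlowup {V : Type*} (G : SimpleGraph V) (t : ℕ)
    (σ : V → V → Equiv (Fin t) (Fin t)) (hσ : ∀ u v, σ v u = (σ u v).symm) :
    SimpleGraph (V × Fin t) where
  Adj x y := (x.1 = y.1 ∧ x.2 ≠ y.2) ∨ (G.Adj x.1 y.1 ∧ σ x.1 y.1 x.2 ≠ y.2)
  symm := by
    refine ⟨?_⟩
    rintro ⟨u, i⟩ ⟨v, j⟩ (⟨h1, h2⟩ | ⟨h1, h2⟩)
    · exact Or.inl ⟨h1.symm, h2.symm⟩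
    · refine Or.inr ⟨h1.symm, ?_⟩
      rw [hσ]
      intro hc
      exact h2 (by rw [← hc]; simp)
  loopless := by
    refine ⟨?_⟩
    rintro ⟨u, i⟩ (⟨-, h⟩ | ⟨h, -⟩)
    · exact h rfl
    · exact G.irrefl h

/-!
Index the path by `0, …, n-1`, so that `i` and `j` are adjacent in `P_n^k` exactly when
`0 < |i - j| ≤ k`, and send `i` to `(f i, c i)` where `f` is the embedded path. The sheared
blow-up only forbids `σ (f i) (f j) (c i) = c j`, and by the symmetry of `σ` it suffices to
check this for `i < j ≤ i + k`. Choosing `c` greedily along the path, each `c j` has to avoid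
at most `k` values, one for each of its predecessors `j - k, …, j - 1`, and `k + 1` colours
are available.
-/

lemma powGraph_map_adj {V W : Type*} {G : SimpleGraph V} {H : SimpleGraph W} {k : ℕ}
    (f : G →g H) (hf : Function.Injective f) {u v : V} (h : (powGraph G k).Adj u v) :
    (powGraph H k).Adj (f u) (f v) := by
  obtain ⟨hne, w, hw⟩ := h
  exact ⟨hf.ne hne, w.map f, by simpa using hw⟩

lemma pathGraph_val_le_add_length {n : ℕ} {i j : Fin n}
    (w : (SimpleGraph.pathGraph n).Walk i j) : (i : ℕ) ≤ j + w.length := by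
  induction w with
  | nil => simp
  | cons h _ ih =>
    rw [SimpleGraph.pathGraph_adj] at h
    rw [SimpleGraph.Walk.length_cons]
    omega

lemma powGraph_pathGraph_val_le_add {n k : ℕ} {i j : Fin n}
    (h : (powGraph (SimpleGraph.pathGraph n) k).Adj i j) : (i : ℕ) ≤ j + k := by
  obtain ⟨-, w, hw⟩ := h
  have := pathGraph_val_le_add_length w
  omega

lemma Equiv.apply_ne_iff_of_symm {ι β : Type*} {σ : ι → ι → β ≃ β}
    (hσ : ∀ u v, σ v u = (σ u v).symm) {u v : ι} {x y : β} :
    σ u v x ≠ y ↔ σ v u y ≠ x := by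
  rw [hσ, Ne, Ne, Equiv.symm_apply_eq, eq_comm]

theorem Nat.exists_colouring_forall_apply_ne {α : Type*} [Fintype α] {k : ℕ}
    (hk : k < Fintype.card α) (τ : ℕ → ℕ → α → α) (N : ℕ) :
    ∃ c : ℕ → α, ∀ i j, i < j → j < N → j ≤ i + k → τ i j (c i) ≠ c j := by
  classical
  induction N with
  | zero =>
    have : Nonempty α := Fintype.card_pos_iff.mp (by omega)
    exact ⟨fun _ => Classical.arbitrary α, fun _ _ _ hj _ => absurd hj (Nat.not_lt_zero _)⟩
  | succ N ih =>
    obtain ⟨c, hc⟩ := ih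
    set forbidden := (Finset.Ico (N - k) N).image fun i => τ i N (c i)
    have hcard : forbidden.card < (Finset.univ : Finset α).card := by
      calc forbidden.card ≤ (Finset.Ico (N - k) N).card := Finset.card_image_le
        _ ≤ k := by rw [Nat.card_Ico]; omega
        _ < _ := hk
    obtain ⟨a, -, ha⟩ := Finset.exists_mem_notMem_of_card_lt_card hcard
    refine ⟨Function.update c N a, fun i j hij hj hjk => ?_⟩
    rw [Function.update_of_ne (by omega)]
    rcases (Nat.lt_succ_iff.mp hj).lt_or_eq with hj | rfl
    · rw [Function.update_of_ne hj.ne]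
      exact hc i j hij hj hjk
    · rw [Function.update_self]
      rintro rfl
      exact ha (Finset.mem_image.mpr ⟨i, Finset.mem_Ico.mpr ⟨by omega, hij⟩, rfl⟩)

theorem Fin.exists_colouring_forall_apply_ne {α : Type*} [Fintype α] {k N : ℕ}
    (hk : k < Fintype.card α) (τ : Fin N → Fin N → α → α) :
    ∃ c : Fin N → α, ∀ i j : Fin N, i < j → (j : ℕ) ≤ i + k → τ i j (c i) ≠ c j := by
  obtain ⟨c, hc⟩ := Nat.exists_colouring_forall_apply_ne hk
    (fun i j => if h : i < N ∧ j < N then τ ⟨i, h.1⟩ ⟨j, h.2⟩ else id) N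
  exact ⟨fun i => c i, fun i j hij hjk => by simpa using hc i j hij j.isLt hjk⟩

theorem stmt4_general {V : Type*} (G : SimpleGraph V) (k n : ℕ)
    (σ : V → V → Equiv (Fin (k + 1)) (Fin (k + 1)))
    (hσ : ∀ u v, σ v u = (σ u v).symm)
    (hpath : ∃ f : SimpleGraph.pathGraph n →g G, Function.Injective f) :
    ∃ g : powGraph (SimpleGraph.pathGraph n) k →g
        shearedBlowup (powGraph G k) (k + 1) σ hσ, Function.Injective g := by
  obtain ⟨f, hf⟩ := hpath
  obtain ⟨c, hc⟩ := Fin.exists_colouring_forall_apply_ne (α := Fin (k + 1)) (k := k) (by simp)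
    fun i j => σ (f i) (f j)
  refine ⟨⟨fun i => (f i, c i), fun {i j} hij => ?_⟩, fun i j h => hf (congrArg Prod.fst h)⟩
  refine Or.inr ⟨powGraph_map_adj f hf hij, ?_⟩
  rcases lt_or_gt_of_ne hij.ne with hlt | hgt
  · exact hc i j hlt (powGraph_pathGraph_val_le_add hij.symm)
  · exact (Equiv.apply_ne_iff_of_symm hσ).mpr (hc j i hgt (powGraph_pathGraph_val_le_add hij))

/-- If `G` contains a path on `n` vertices, then any sheared complete
blow-up `G^k{k+1}` contains a copy of `P_n^k`. -/
theorem stmt4 {V : Type*} (G : SimpleGraph V) (k n : ℕ) (hk : 1 ≤ k)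
    (σ : V → V → Equiv (Fin (k + 1)) (Fin (k + 1)))
    (hσ : ∀ u v, σ v u = (σ u v).symm)
    (hpath : ∃ f : SimpleGraph.pathGraph n →g G, Function.Injective f) :
    ∃ g : powGraph (SimpleGraph.pathGraph n) k →g
        shearedBlowup (powGraph G k) (k + 1) σ hσ, Function.Injective g :=
  stmt4_general G k n σ hσ hpath
end

section
/- Let G be a graph with no cycle of length at most 2t², and let Q_1, …, Q_m be pairwise disjoint vertex sets, each spanning a path on t vertices in G. Define the auxiliary graph H on vertex set {Q_1,…,Q_m} with Q_iQ_j an edge iff there is an edge of G between the vertex sets Q_i and Q_j. Then H contains no cycle of length at most 2t. -/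
/-!
Pick one edge `uv` of `G` realising the first edge `Q_i Q_j` of a short cycle in `H`. Following the
rest of the cycle and crossing each block `Q_k` along its spanning path (at most `t - 1` steps)
gives a walk from `v` back to `u` in `G` of length less than `2t²`. That walk never uses the
edge `uv`: inside a block it cannot, and every crossing edge between blocks lies over an
edge of the cycle other than `Q_i Q_j`. Shortening it to a path and closing it with `uv` gives a
short cycle in `G`.
-/

/-- `Q` is the vertex set of a path on `t` vertices in `G`. -/
def SpansPath {V : Type*} [DecidableEq V] (G : SimpleGraph V) (t : ℕ)
    (Q : Finset V) : Prop :=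
  ∃ f : Fin t → V, Function.Injective f ∧ Finset.image f Finset.univ = Q ∧
    ∀ (l : ℕ) (h : l + 1 < t), G.Adj (f ⟨l, by omega⟩) (f ⟨l + 1, h⟩)

/-- The auxiliary graph on the blocks `Q_1, …, Q_m`: two blocks are adjacent iff
`G` has an edge between them. -/
def auxGraph {V : Type*} (G : SimpleGraph V) (m : ℕ) (Q : Fin m → Finset V) :
    SimpleGraph (Fin m) where
  Adj i j := i ≠ j ∧ ∃ u ∈ Q i, ∃ v ∈ Q j, G.Adj u v
  symm := ⟨by
    rintro i j ⟨hij, u, hu, v, hv, h⟩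
    exact ⟨hij.symm, v, hv, u, hu, h.symm⟩⟩
  loopless := ⟨fun i h => h.1 rfl⟩

namespace SimpleGraph

variable {V : Type*} {G : SimpleGraph V}

theorem exists_isCycle_length_le_of_adj {u v : V} (huv : G.Adj u v) (p : G.Walk v u)
    (hp : s(u, v) ∉ p.edges) : ∃ c : G.Walk u u, c.IsCycle ∧ c.length ≤ p.length + 1 := by
  classical
  refine ⟨.cons huv p.bypass, (Walk.cons_isCycle_iff _ _).2
    ⟨p.bypass_isPath, fun h => hp (p.edges_bypass_subset_edges h)⟩, ?_⟩
  simpa using p.length_bypass_le_length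

section PathWalk

variable {t : ℕ} (f : Fin t → V)
  (hf : ∀ (l : ℕ) (h : l + 1 < t), G.Adj (f ⟨l, by omega⟩) (f ⟨l + 1, h⟩))
include hf

theorem exists_walk_of_adj_succ_of_eq_add (d : ℕ) :
    ∀ a b : Fin t, (b : ℕ) = a + d →
      ∃ p : G.Walk (f a) (f b), p.length = d ∧ ∀ v ∈ p.support, v ∈ Set.range f := by
  induction d with
  | zero =>
    intro a b hab
    obtain rfl : a = b := Fin.ext (by omega)
    exact ⟨.nil, rfl, by simp⟩
  | succ d ih =>
    intro a b hab
    have ha : (a : ℕ) + 1 < t := by omega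
    obtain ⟨p, hlen, hsupp⟩ := ih ⟨a + 1, ha⟩ b (by simp only; omega)
    refine ⟨.cons (hf a ha) p, by simp [hlen], ?_⟩
    simpa [Walk.support_cons] using hsupp

theorem exists_walk_of_adj_succ (a b : Fin t) :
    ∃ p : G.Walk (f a) (f b), p.length ≤ t - 1 ∧ ∀ v ∈ p.support, v ∈ Set.range f := by
  rcases le_total (a : ℕ) b with hab | hba
  · obtain ⟨p, hlen, hsupp⟩ := exists_walk_of_adj_succ_of_eq_add f hf (b - a) a b (by omega)
    exact ⟨p, by omega, hsupp⟩
  · obtain ⟨p, hlen, hsupp⟩ := exists_walk_of_adj_succ_of_eq_add f hf (a - b) b a (by omega)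
    exact ⟨p.reverse, by simp only [Walk.length_reverse]; omega, by simpa using hsupp⟩

end PathWalk

end SimpleGraph

open SimpleGraph

namespace SpansPath

variable {V : Type*} [DecidableEq V] {G : SimpleGraph V} {t : ℕ}

theorem pos {Q : Finset V} (h : SpansPath G t Q) {x : V} (hx : x ∈ Q) : 0 < t := by
  obtain ⟨f, -, rfl, -⟩ := h
  obtain ⟨a, -, -⟩ := Finset.mem_image.mp hx
  exact a.pos

theorem exists_walk {Q : Finset V} (h : SpansPath G t Q) {x y : V}
    (hx : x ∈ Q) (hy : y ∈ Q) :
    ∃ p : G.Walk x y, p.length ≤ t - 1 ∧ ∀ v ∈ p.support, v ∈ Q := by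
  obtain ⟨f, -, rfl, hf⟩ := h
  obtain ⟨a, -, rfl⟩ := Finset.mem_image.mp hx
  obtain ⟨b, -, rfl⟩ := Finset.mem_image.mp hy
  obtain ⟨p, hlen, hsupp⟩ := exists_walk_of_adj_succ f hf a b
  refine ⟨p, hlen, fun v hv => ?_⟩
  obtain ⟨k, rfl⟩ := hsupp v hv
  exact Finset.mem_image_of_mem f (Finset.mem_univ k)

end SpansPath

section DisjointBlocks

variable {V ι : Type*} {Q : ι → Finset V}
  (hdisj : ∀ i j, i ≠ j → Disjoint (Q i) (Q j))
include hdisj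

theorem eq_of_mem_of_mem {a b : ι} {v : V} (ha : v ∈ Q a) (hb : v ∈ Q b) : a = b := by
  by_contra hne
  exact Finset.disjoint_left.mp (hdisj a b hne) ha hb

theorem sym2_eq_of_mem_of_mem {a b i j : ι} {x y u v : V} (hx : x ∈ Q a) (hy : y ∈ Q b)
    (hu : u ∈ Q i) (hv : v ∈ Q j) (h : s(x, y) = s(u, v)) : s(a, b) = s(i, j) := by
  rcases Sym2.eq_iff.mp h with ⟨rfl, rfl⟩ | ⟨rfl, rfl⟩
  · rw [eq_of_mem_of_mem hdisj hx hu, eq_of_mem_of_mem hdisj hy hv]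
  · rw [eq_of_mem_of_mem hdisj hx hv, eq_of_mem_of_mem hdisj hy hu, Sym2.eq_swap]

theorem not_mem_edges_of_support_subset {G : SimpleGraph V} {i j a : ι} (hij : i ≠ j)
    {u v : V} (hu : u ∈ Q i) (hv : v ∈ Q j) {x y : V} (p : G.Walk x y)
    (hp : ∀ w ∈ p.support, w ∈ Q a) :
    s(u, v) ∉ p.edges := fun he =>
  hij <| (eq_of_mem_of_mem hdisj hu (hp _ (p.fst_mem_support_of_mem_edges he))).trans
    (eq_of_mem_of_mem hdisj (hp _ (p.snd_mem_support_of_mem_edges he)) hv)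

end DisjointBlocks

theorem exists_walk_of_auxGraph_walk {V : Type*} [DecidableEq V] {G : SimpleGraph V} {t m : ℕ}
    {Q : Fin m → Finset V} (hdisj : ∀ i j, i ≠ j → Disjoint (Q i) (Q j))
    (hpath : ∀ i, SpansPath G t (Q i)) {i j : Fin m}
    (hij : i ≠ j) {u v : V} (hu : u ∈ Q i) (hv : v ∈ Q j) {a b : Fin m}
    (p : (auxGraph G m Q).Walk a b) (hp : s(i, j) ∉ p.edges) {x z : V} (hx : x ∈ Q a)
    (hz : z ∈ Q b) :
    ∃ P : G.Walk x z, P.length ≤ p.length * t + (t - 1) ∧ s(u, v) ∉ P.edges := by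
  induction p generalizing x with
  | nil =>
    obtain ⟨P, hlen, hsupp⟩ := (hpath _).exists_walk hx hz
    exact ⟨P, by simpa using hlen, not_mem_edges_of_support_subset hdisj hij hu hv P hsupp⟩
  | @cons a c b hac p ih =>
    rw [Walk.edges_cons, List.mem_cons, not_or] at hp
    obtain ⟨-, y, hy, y', hy', hyy'⟩ := id hac
    obtain ⟨W, hWlen, hWsupp⟩ := (hpath a).exists_walk hx hy
    obtain ⟨P, hPlen, hPe⟩ := ih hp.2 hy' hz
    have ht := (hpath a).pos hx
    refine ⟨W.append (.cons hyy' P), ?_, ?_⟩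
    · rw [Walk.length_append, Walk.length_cons, Walk.length_cons, Nat.succ_mul]
      omega
    · simp only [Walk.edges_append, Walk.edges_cons, List.mem_append, List.mem_cons, not_or]
      exact ⟨not_mem_edges_of_support_subset hdisj hij hu hv W hWsupp,
        fun h => hp.1 (sym2_eq_of_mem_of_mem hdisj hu hv hy hy' h), hPe⟩

/-- If `G` has no cycle of length at most `2t²` and `Q_1, …, Q_m` are
pairwise disjoint sets each spanning a path on `t` vertices in `G`, then the auxiliary
graph `H` on the blocks has no cycle of length at most `2t`. -/
theorem stmt7 {V : Type*} [DecidableEq V] (G : SimpleGraph V) (t m : ℕ)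
    (hgirth : ∀ (v : V) (w : G.Walk v v), w.IsCycle → 2 * t ^ 2 < w.length)
    (Q : Fin m → Finset V)
    (hdisj : ∀ i j, i ≠ j → Disjoint (Q i) (Q j))
    (hpath : ∀ i, SpansPath G t (Q i)) :
    ∀ (i : Fin m) (w : (auxGraph G m Q).Walk i i), w.IsCycle → 2 * t < w.length := by
  intro i w hw
  by_contra! hlen
  cases w with
  | nil => exact hw.ne_nil rfl
  | @cons _ j _ hij w =>
    obtain ⟨hne, u, hu, v, hv, huv⟩ := id hij
    have hw : s(i, j) ∉ w.edges := ((Walk.cons_isCycle_iff _ _).1 hw).2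
    obtain ⟨P, hPlen, hPe⟩ := exists_walk_of_auxGraph_walk hdisj hpath hne hu hv w hw hv hu
    obtain ⟨c, hc, hclen⟩ := exists_isCycle_length_le_of_adj huv P hPe
    have ht := (hpath i).pos hu
    have hlift : w.length * t + t ≤ 2 * t ^ 2 := by
      rw [Walk.length_cons] at hlen
      nlinarith
    have := hgirth u c hc
    omega
end

section
/- For every integer t ≥ 1 and every γ > 0 there exists d₀ > 0 such that for all d ≥ d₀ the following holds. Let G be a graph with dn vertices such that every pair of disjoint sets X, Y ⊆ V(G) with |X|, |Y| ≥ γn satisfies e(X,Y) > 0. Then for every family V_1, …, V_t of pairwise disjoint subsets of V(G), each of size at least γ·d·n, there is a path (x_1, …, x_n) in G with x_i ∈ V_j for all 1 ≤ i ≤ n, where j ≡ i (mod t). -/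
private lemma stmt10_mod_succ {t : ℕ} (ht : 0 < t) (k : ℕ) :
    (k % t + 1) % t = (k + 1) % t := by
  conv_rhs => rw [← Nat.mod_add_div k t]
  rw [add_right_comm, Nat.add_mul_mod_self_left]

set_option maxHeartbeats 1000000 in
/-- Lemma 3.5 of Clemens et al.. For every `t ≥ 1` and `γ > 0` there is
`d₀ > 0` such that for all `d ≥ d₀`: if `G` has `dn` vertices and any two disjoint vertex
sets of size at least `γn` are joined by an edge, then for all pairwise disjoint sets
`V_1, …, V_t`, each of size at least `γdn`, there is a path `(x_1, …, x_n)` in `G` that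
cycles through the sets `V_1, …, V_t` in order. -/
theorem stmt10 (t : ℕ) (ht : 1 ≤ t) (γ : ℝ) (hγ : 0 < γ) :
    ∃ d₀ : ℝ, 0 < d₀ ∧ ∀ d : ℝ, d₀ ≤ d →
      ∀ (n N : ℕ) (V : Type) (_ : Fintype V) (_ : DecidableEq V)
        (G : SimpleGraph V), (N : ℝ) = d * n → Fintype.card V = N →
      (∀ X Y : Finset V, Disjoint X Y → γ * n ≤ X.card → γ * n ≤ Y.card →
        ∃ x ∈ X, ∃ y ∈ Y, G.Adj x y) →
      ∀ W : Fin t → Finset V, (∀ i j, i ≠ j → Disjoint (W i) (W j)) →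
        (∀ i, γ * d * n ≤ ((W i).card : ℝ)) →
        ∃ x : Fin n → V, Function.Injective x ∧
          (∀ (i : ℕ) (h : i + 1 < n), G.Adj (x ⟨i, by omega⟩) (x ⟨i + 1, h⟩)) ∧
          ∀ i : Fin n, x i ∈ W ⟨i.val % t, Nat.mod_lt _ (by omega)⟩ := by
  have ht' : 0 < t := ht
  refine ⟨t + 2 + 2 / γ, by positivity, ?_⟩
  intro d hd n N V _ _ G hN hcard hexp W hdisj hWcard
  classical
  rcases Nat.eq_zero_or_pos n with hn0 | hn
  · subst hn0
    exact ⟨fun i => i.elim0, fun a => a.elim0, fun i h => by omega, fun i => i.elim0⟩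
  -- key inequality on d
  have hdn : γ * t * n + 2 * γ * n + 2 * n ≤ γ * d * n := by
    have h1 : γ * (t + 2 + 2 / γ) * n ≤ γ * d * n := by
      have hn' : (0 : ℝ) ≤ n := by positivity
      have := mul_le_mul_of_nonneg_left hd (le_of_lt hγ)
      nlinarith
    have h2 : γ * (t + 2 + 2 / γ) * n = γ * t * n + 2 * γ * n + 2 * n := by
      field_simp
    linarith [h2 ▸ h1]
  have hn1 : (1 : ℝ) ≤ n := by exact_mod_cast hn
  -- the successor function on classes
  set nxt : Fin t → Fin t := fun j => ⟨(j.val + 1) % t, Nat.mod_lt _ ht'⟩ with hnxt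
  -- all class vertices
  set A : Finset V := Finset.univ.biUnion W with hA
  have hWA : ∀ j : Fin t, W j ⊆ A := by
    intro j v hv
    exact Finset.mem_biUnion.2 ⟨j, Finset.mem_univ j, hv⟩
  -- a vertex lies in at most one class
  have huniq : ∀ v : V, ∀ i j : Fin t, v ∈ W i → v ∈ W j → i = j := by
    intro v i j hi hj
    by_contra hne
    exact Finset.disjoint_left.1 (hdisj i j hne) hi hj
  -- extraction of the path from a long stack
  have hsucc : ∀ P : List V, P.Nodup →
      (∀ i (h : i < P.length), P[i] ∈ W ⟨i % t, Nat.mod_lt _ ht'⟩) →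
      (∀ i (h : i + 1 < P.length), G.Adj (P[i]'(by omega)) (P[i+1]'h)) →
      n ≤ P.length →
      ∃ x : Fin n → V, Function.Injective x ∧
        (∀ (i : ℕ) (h : i + 1 < n), G.Adj (x ⟨i, by omega⟩) (x ⟨i + 1, h⟩)) ∧
        ∀ i : Fin n, x i ∈ W ⟨i.val % t, Nat.mod_lt _ (by omega)⟩ := by
    intro P hnd hpat hadj hlen
    refine ⟨fun i => P[i.val]'(by omega), ?_, ?_, ?_⟩
    · intro a b hab
      have h2 : P.get ⟨a.val, by omega⟩ = P.get ⟨b.val, by omega⟩ := by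
        simpa [List.get_eq_getElem] using hab
      have h3 := List.nodup_iff_injective_get.1 hnd h2
      exact Fin.ext (by simpa using congrArg Fin.val h3)
    · intro i h
      exact hadj i (by omega)
    · intro i
      exact hpat i.val (by omega)
  -- if F is large, the stack must be long
  have hbigF : ∀ (F : Finset V) (P : List V), Disjoint F P.toFinset → F ⊆ A →
      (∀ u ∈ F, ∀ j : Fin t, u ∈ W j → ∀ v, G.Adj u v → v ∈ W (nxt j) →
        v ∈ F ∪ P.toFinset) →
      ((F.card : ℝ) ≤ γ * t * n + 1) → (γ * t * n ≤ (F.card : ℝ)) →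
      n ≤ P.length := by
    intro F P hFP hFA hinv hF7 hFbig
    -- pigeonhole: some class meets F in at least γn vertices
    have hpig : ∃ j : Fin t, γ * n ≤ ((F ∩ W j).card : ℝ) := by
      by_contra hcon
      push_neg at hcon
      have hsub : F ⊆ Finset.univ.biUnion (fun j => F ∩ W j) := by
        intro u hu
        obtain ⟨j, _, hj⟩ := Finset.mem_biUnion.1 (hFA hu)
        exact Finset.mem_biUnion.2 ⟨j, Finset.mem_univ j, Finset.mem_inter.2 ⟨hu, hj⟩⟩
      have h1 : F.card ≤ ∑ j : Fin t, (F ∩ W j).card :=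
        le_trans (Finset.card_le_card hsub) (Finset.card_biUnion_le)
      have h2 : ((F.card : ℝ)) ≤ ∑ j : Fin t, ((F ∩ W j).card : ℝ) := by
        exact_mod_cast h1
      have h3 : ∑ j : Fin t, ((F ∩ W j).card : ℝ) < ∑ _j : Fin t, γ * n :=
        Finset.sum_lt_sum_of_nonempty ⟨⟨0, ht'⟩, Finset.mem_univ _⟩
          (fun j _ => hcon j)
      rw [Finset.sum_const, Finset.card_univ, Fintype.card_fin, nsmul_eq_mul] at h3
      nlinarith
    obtain ⟨j, hj⟩ := hpig
    -- the unvisited part of the next class is small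
    have hY : ((W (nxt j) \ (F ∪ P.toFinset)).card : ℝ) < γ * n := by
      by_contra hcon
      push_neg at hcon
      have hdisjXY : Disjoint (F ∩ W j) (W (nxt j) \ (F ∪ P.toFinset)) := by
        refine Finset.disjoint_left.2 fun v hv hv' => ?_
        exact (Finset.mem_sdiff.1 hv').2
          (Finset.mem_union_left _ (Finset.mem_inter.1 hv).1)
      obtain ⟨x, hx, y, hy, hxy⟩ := hexp _ _ hdisjXY hj hcon
      have hxF := (Finset.mem_inter.1 hx).1
      have hxW := (Finset.mem_inter.1 hx).2
      have hyW := (Finset.mem_sdiff.1 hy).1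
      exact (Finset.mem_sdiff.1 hy).2 (hinv x hxF j hxW y hxy hyW)
    have hsubW : W (nxt j) ⊆ (F ∪ P.toFinset) ∪ (W (nxt j) \ (F ∪ P.toFinset)) := by
      intro w hw
      by_cases hwf : w ∈ F ∪ P.toFinset
      · exact Finset.mem_union_left _ hwf
      · exact Finset.mem_union_right _ (Finset.mem_sdiff.2 ⟨hw, hwf⟩)
    have hc1 : (W (nxt j)).card ≤ F.card + P.length
        + (W (nxt j) \ (F ∪ P.toFinset)).card := by
      calc (W (nxt j)).card ≤ ((F ∪ P.toFinset) ∪ (W (nxt j) \ (F ∪ P.toFinset))).card :=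
            Finset.card_le_card hsubW
        _ ≤ (F ∪ P.toFinset).card + (W (nxt j) \ (F ∪ P.toFinset)).card :=
            Finset.card_union_le _ _
        _ ≤ (F.card + P.toFinset.card) + (W (nxt j) \ (F ∪ P.toFinset)).card :=
            Nat.add_le_add_right (Finset.card_union_le _ _) _
        _ ≤ (F.card + P.length) + (W (nxt j) \ (F ∪ P.toFinset)).card :=
            Nat.add_le_add_right (Nat.add_le_add_left (List.toFinset_card_le _) _) _
    have hc2 : ((W (nxt j)).card : ℝ) ≤ (F.card : ℝ) + (P.length : ℝ)
        + ((W (nxt j) \ (F ∪ P.toFinset)).card : ℝ) := by exact_mod_cast hc1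
    have hWn := hWcard (nxt j)
    have : (n : ℝ) ≤ (P.length : ℝ) := by nlinarith
    exact_mod_cast this
  -- if the first class is exhausted, contradiction
  have hnores : ∀ (F : Finset V) (P : List V),
      W ⟨0, ht'⟩ ⊆ F ∪ P.toFinset → ((F.card : ℝ) ≤ γ * t * n + 1) →
      P.length < n → False := by
    intro F P hsub hF7 hlen
    have hc1 : (W ⟨0, ht'⟩).card ≤ F.card + P.length :=
      le_trans (Finset.card_le_card hsub)
        (le_trans (Finset.card_union_le _ _)
          (Nat.add_le_add_left (List.toFinset_card_le _) _))
    have hc2 : ((W ⟨0, ht'⟩).card : ℝ) ≤ (F.card : ℝ) + (P.length : ℝ) := by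
      exact_mod_cast hc1
    have hW0 := hWcard ⟨0, ht'⟩
    have hlen' : ((P.length : ℝ)) ≤ (n : ℝ) - 1 := by
      have : (P.length : ℝ) + 1 ≤ (n : ℝ) := by exact_mod_cast hlen
      linarith
    nlinarith
  -- the main DFS induction
  have key : ∀ (μ : ℕ) (F : Finset V) (P : List V),
      P.Nodup →
      Disjoint F P.toFinset →
      F ⊆ A →
      (∀ i (h : i < P.length), P[i] ∈ W ⟨i % t, Nat.mod_lt _ ht'⟩) →
      (∀ i (h : i + 1 < P.length), G.Adj (P[i]'(by omega)) (P[i+1]'h)) →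
      (∀ u ∈ F, ∀ j : Fin t, u ∈ W j → ∀ v, G.Adj u v → v ∈ W (nxt j) →
        v ∈ F ∪ P.toFinset) →
      ((F.card : ℝ) ≤ γ * t * n + 1) →
      2 * (A \ (F ∪ P.toFinset)).card + P.length ≤ μ →
      ∃ x : Fin n → V, Function.Injective x ∧
        (∀ (i : ℕ) (h : i + 1 < n), G.Adj (x ⟨i, by omega⟩) (x ⟨i + 1, h⟩)) ∧
        ∀ i : Fin n, x i ∈ W ⟨i.val % t, Nat.mod_lt _ (by omega)⟩ := by
    intro μ
    induction μ with
    | zero =>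
      intro F P hnd hFP hFA hpat hadj hinv hF7 hmeas
      exfalso
      have hP0 : P.length = 0 := by omega
      have hU0 : (A \ (F ∪ P.toFinset)).card = 0 := by omega
      have hsub : W ⟨0, ht'⟩ ⊆ F ∪ P.toFinset := by
        intro w hw
        by_contra hwf
        have : w ∈ A \ (F ∪ P.toFinset) := Finset.mem_sdiff.2 ⟨hWA _ hw, hwf⟩
        simpa [Finset.card_eq_zero.1 hU0] using this
      exact hnores F P hsub hF7 (by omega)
    | succ μ ih =>
      intro F P hnd hFP hFA hpat hadj hinv hF7 hmeas
      by_cases hlen : n ≤ P.length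
      · exact hsucc P hnd hpat hadj hlen
      push_neg at hlen
      rcases eq_or_ne P [] with hPe | hPne
      · -- restart: push a vertex of W 0
        subst hPe
        by_cases hex : ∃ v ∈ W ⟨0, ht'⟩, v ∉ F
        · obtain ⟨v, hvW, hvF⟩ := hex
          have hvA : v ∈ A := hWA _ hvW
          have hvU : v ∈ A \ (F ∪ ([] : List V).toFinset) := by
            simp [Finset.mem_sdiff, hvA, hvF]
          refine ih F [v] (by simp) (by simp [Finset.disjoint_singleton_right, hvF])
            hFA ?pat (by intro i h; simp at h) ?inv hF7 ?meas
          case pat =>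
            intro i h
            simp only [List.length_singleton] at h
            interval_cases i
            simpa [Nat.zero_mod] using hvW
          case inv =>
            intro u hu j hj v' hv' hv'W
            have := hinv u hu j hj v' hv' hv'W
            simp only [List.toFinset_nil] at this
            simp only [List.toFinset_cons, List.toFinset_nil, LawfulSingleton.insert_empty_eq]
            exact Finset.mem_union.2 (Or.inl (by simpa using this))
          case meas =>
            have hset : A \ (F ∪ ([v] : List V).toFinset)
                = (A \ (F ∪ ([] : List V).toFinset)).erase v := by
              ext w
              simp only [Finset.mem_sdiff, Finset.mem_union, Finset.mem_erase,
                List.toFinset_cons, List.toFinset_nil, LawfulSingleton.insert_empty_eq,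
                Finset.mem_insert, List.mem_toFinset, List.not_mem_nil,
                Finset.mem_singleton, Finset.notMem_empty, or_false]
              tauto
            have hcard : (A \ (F ∪ ([v] : List V).toFinset)).card
                = (A \ (F ∪ ([] : List V).toFinset)).card - 1 := by
              rw [hset, Finset.card_erase_of_mem hvU]
            have hpos : 1 ≤ (A \ (F ∪ ([] : List V).toFinset)).card :=
              Finset.card_pos.2 ⟨v, hvU⟩
            simp only [List.length_singleton, List.length_nil] at *
            omega
        · push_neg at hex
          exact absurd (hnores F [] (fun w hw => Finset.mem_union.2 (Or.inl (hex w hw)))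
            hF7 (by simpa using hn)) not_false
      · -- nonempty stack: try to extend from the top
        have hP1 : 1 ≤ P.length := List.length_pos_iff.2 hPne
        set k := P.length - 1 with hk
        have hkP : k < P.length := by omega
        set u := P[k]'hkP with hu
        have huW : u ∈ W ⟨k % t, Nat.mod_lt _ ht'⟩ := hpat k hkP
        by_cases hex : ∃ v, v ∈ W (nxt ⟨k % t, Nat.mod_lt _ ht'⟩) ∧
            v ∉ F ∪ P.toFinset ∧ G.Adj u v
        · -- push
          obtain ⟨v, hvW, hvFP, hadjv⟩ := hex
          have hvA : v ∈ A := hWA _ hvW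
          have hvP : v ∉ P := fun h =>
            hvFP (Finset.mem_union_right _ (List.mem_toFinset.2 h))
          have hvF : v ∉ F := fun h => hvFP (Finset.mem_union_left _ h)
          have hvU : v ∈ A \ (F ∪ P.toFinset) := Finset.mem_sdiff.2 ⟨hvA, hvFP⟩
          have hlenPv : (P ++ [v]).length = P.length + 1 := by simp
          refine ih F (P ++ [v]) ?nd ?dis hFA ?pat ?adj ?inv hF7 ?meas
          case nd =>
            exact List.nodup_append.2 ⟨hnd, List.nodup_singleton v,
              fun a ha b hb hab => by simp at hb; subst hb; exact hvP (hab ▸ ha)⟩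
          case dis =>
            rw [List.toFinset_append]
            simp only [List.toFinset_cons, List.toFinset_nil, LawfulSingleton.insert_empty_eq]
            exact Finset.disjoint_union_right.2 ⟨hFP,
              Finset.disjoint_singleton_right.2 hvF⟩
          case pat =>
            intro i h
            rw [hlenPv] at h
            rcases lt_or_eq_of_le (Nat.lt_succ_iff.1 h) with hi | hi
            · rw [List.getElem_append_left hi]
              exact hpat i hi
            · subst hi
              rw [List.getElem_concat_length (l := P) (a := v) rfl]
              have hval : (nxt ⟨k % t, Nat.mod_lt _ ht'⟩ : Fin t)
                  = ⟨P.length % t, Nat.mod_lt _ ht'⟩ := by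
                apply Fin.ext
                show (k % t + 1) % t = P.length % t
                rw [stmt10_mod_succ ht' k]
                congr 1
                omega
              rw [← hval]
              exact hvW
          case adj =>
            intro i h
            rw [hlenPv] at h
            have hi1 : i + 1 ≤ P.length := by omega
            rcases lt_or_eq_of_le hi1 with hi | hi
            · rw [List.getElem_append_left (by omega : i < P.length),
                List.getElem_append_left hi]
              exact hadj i hi
            · have hik : i = k := by omega
              rw [List.getElem_append_left (by omega : i < P.length)]
              have h2 : (P ++ [v])[i+1]'(by simp; omega) = v :=
                List.getElem_concat_length (l := P) (a := v) hi _
              rw [h2]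
              subst hik
              exact hadjv
          case inv =>
            intro u' hu' j hj v' hv' hv'W
            have := hinv u' hu' j hj v' hv' hv'W
            rw [List.toFinset_append]
            simp only [Finset.mem_union] at this ⊢
            tauto
          case meas =>
            have hset : F ∪ (P ++ [v]).toFinset = insert v (F ∪ P.toFinset) := by
              rw [List.toFinset_append]
              simp only [List.toFinset_cons, List.toFinset_nil, LawfulSingleton.insert_empty_eq]
              ext w
              simp only [Finset.mem_union, Finset.mem_insert, Finset.mem_singleton]
              tauto
            have hset2 : A \ (F ∪ (P ++ [v]).toFinset)
                = (A \ (F ∪ P.toFinset)).erase v := by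
              rw [hset]
              ext w
              simp only [Finset.mem_sdiff, Finset.mem_insert, Finset.mem_erase]
              tauto
            have hcard : (A \ (F ∪ (P ++ [v]).toFinset)).card
                = (A \ (F ∪ P.toFinset)).card - 1 := by
              rw [hset2, Finset.card_erase_of_mem hvU]
            have hpos : 1 ≤ (A \ (F ∪ P.toFinset)).card :=
              Finset.card_pos.2 ⟨v, hvU⟩
            rw [hlenPv]
            omega
        · -- pop (or win if F is already large)
          by_cases hF : (F.card : ℝ) ≤ γ * t * n
          · -- pop the top vertex
            push_neg at hex
            have hPdec : P.dropLast ++ [u] = P := by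
              have := List.dropLast_append_getLast hPne
              rwa [List.getLast_eq_getElem hPne] at this
            have huP : u ∈ P := by
              rw [← hPdec]; exact List.mem_append_right _ (List.mem_singleton.2 rfl)
            have huF : u ∉ F := fun h =>
              Finset.disjoint_left.1 hFP h (List.mem_toFinset.2 huP)
            have hndP' : P.dropLast.Nodup := (List.dropLast_sublist P).nodup hnd
            have huP' : u ∉ P.dropLast := by
              have := hnd
              rw [← hPdec, List.nodup_append] at this
              exact fun h => this.2.2 u h u (List.mem_singleton.2 rfl) rfl
            have hsetP : P.toFinset = insert u P.dropLast.toFinset := by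
              conv_lhs => rw [← hPdec]
              rw [List.toFinset_append]
              simp only [List.toFinset_cons, List.toFinset_nil, LawfulSingleton.insert_empty_eq]
              ext w
              simp only [Finset.mem_union, Finset.mem_insert, Finset.mem_singleton]
              tauto
            have hsetFP : insert u F ∪ P.dropLast.toFinset = F ∪ P.toFinset := by
              rw [hsetP]
              ext w
              simp only [Finset.mem_union, Finset.mem_insert]
              tauto
            have hlenP' : P.dropLast.length = P.length - 1 :=
              List.length_dropLast
            refine ih (insert u F) P.dropLast hndP' ?dis ?sub ?pat ?adj ?inv ?f7 ?meas
            case dis =>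
              refine Finset.disjoint_left.2 fun w hw hw' => ?_
              rcases Finset.mem_insert.1 hw with hwu | hwF
              · exact huP' (hwu ▸ List.mem_toFinset.1 hw')
              · exact Finset.disjoint_left.1 hFP hwF
                  (List.mem_toFinset.2
                    ((List.dropLast_sublist P).mem (List.mem_toFinset.1 hw')))
            case sub =>
              exact Finset.insert_subset (hWA _ huW) hFA
            case pat =>
              intro i h
              rw [List.getElem_dropLast]
              exact hpat i (by omega)
            case adj =>
              intro i h
              rw [List.getElem_dropLast, List.getElem_dropLast]
              exact hadj i (by rw [hlenP'] at h; omega)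
            case inv =>
              intro u' hu' j hj v' hv' hv'W
              rw [hsetFP]
              rcases Finset.mem_insert.1 hu' with hue | huF'
              · have hu'W : u' ∈ W ⟨k % t, Nat.mod_lt _ ht'⟩ := by rw [hue]; exact huW
                have hjval : j = ⟨k % t, Nat.mod_lt _ ht'⟩ := huniq u' _ _ hj hu'W
                subst hjval
                by_contra hcon
                exact hex v' hv'W hcon (by rw [← hue]; exact hv')
              · exact hinv u' huF' j hj v' hv' hv'W
            case f7 =>
              have : (insert u F).card ≤ F.card + 1 := Finset.card_insert_le _ _
              have h2 : ((insert u F).card : ℝ) ≤ (F.card : ℝ) + 1 := by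
                exact_mod_cast this
              linarith
            case meas =>
              rw [hsetFP, hlenP']
              omega
          · -- F is large: the stack is long, contradiction with hlen
            push_neg at hF
            exact absurd (hbigF F P hFP hFA hinv hF7 (le_of_lt hF)) (by omega)
  -- start the process with empty state
  have h0 : (∅ : Finset V) ∪ ([] : List V).toFinset = ∅ := by simp
  refine key (2 * (A \ ((∅ : Finset V) ∪ ([] : List V).toFinset)).card + 0)
    ∅ [] List.nodup_nil (by simp) (Finset.empty_subset A)
    (by intro i h; simp at h) (by intro i h; simp at h)
    (by intro u hu; simp at hu) (by simp; positivity) (by simp)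
end

section
/- Let H be a graph with maximum degree Δ_H, and let (B(u))_{u∈V(H)} be pairwise disjoint vertex sets of size T' in a graph Γ such that for every edge uv of H there are at least T'² − T' − 4T'^{2−1/(2k)} 'good' edges between B(u) and B(v). If 40(Δ_H + 1)·T'^{−1/(2k)} ≤ 1 (more precisely, 4·2Δ_H·5T'^{−1/(2k)} ≤ 1), then one can choose one vertex x_u ∈ B(u) for each u ∈ V(H) such that for every edge uv of H, {x_u, x_v} is a good edge. In particular, Γ contains a copy of H using only good edges. -/
open scoped Classical

open Finset

namespace Stmt14Aux

set_option linter.unusedSectionVars false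
set_option linter.unusedVariables false

variable {U V : Type*} [Fintype U]

noncomputable def ok (G : SimpleGraph V) (x : U → V) : Sym2 U → Prop :=
  Sym2.lift ⟨fun u v => G.Adj (x u) (x v), fun u v => propext (G.adj_comm (x u) (x v))⟩

lemma ok_mk (G : SimpleGraph V) (x : U → V) (u v : U) :
    ok G x s(u, v) ↔ G.Adj (x u) (x v) := Iff.rfl

lemma ok_congr {G : SimpleGraph V} {x y : U → V} {e : Sym2 U}
    (h : ∀ w ∈ e, x w = y w) : ok G x e ↔ ok G y e := by
  induction e using Sym2.ind with
  | _ u v =>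
    rw [ok_mk, ok_mk, h u (Sym2.mem_mk_left u v), h v (Sym2.mem_mk_right u v)]

lemma fiber_const (G : SimpleGraph V) (B : U → Finset V) {u v : U} (huv : u ≠ v)
    {S : Finset (Sym2 U)} (hS : ∀ f ∈ S, u ∉ f ∧ v ∉ f)
    {a a' b b' : V} (ha : a ∈ B u) (ha' : a' ∈ B u) (hb : b ∈ B v) (hb' : b' ∈ B v) :
    ((Fintype.piFinset B).filter fun x => (∀ f ∈ S, ok G x f) ∧ x u = a ∧ x v = b).card
    = ((Fintype.piFinset B).filter fun x => (∀ f ∈ S, ok G x f) ∧ x u = a' ∧ x v = b').card := by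
  classical
  have upd_mem : ∀ (x : U → V), x ∈ Fintype.piFinset B → ∀ c ∈ B u, ∀ d ∈ B v,
      Function.update (Function.update x u c) v d ∈ Fintype.piFinset B := by
    intro x hx c hc d hd
    rw [Fintype.mem_piFinset] at hx ⊢
    intro w
    rcases eq_or_ne w v with rfl | hwv
    · simpa using hd
    rcases eq_or_ne w u with rfl | hwu
    · simp [Function.update_of_ne hwv, hc]
    · simp [Function.update_of_ne hwv, Function.update_of_ne hwu, hx w]
  have upd_ok : ∀ (x : U → V) (c d : V) (f : Sym2 U), f ∈ S →
      (ok G (Function.update (Function.update x u c) v d) f ↔ ok G x f) := by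
    intro x c d f hf
    refine ok_congr fun w hw => ?_
    have hwu : w ≠ u := fun h => (hS f hf).1 (h ▸ hw)
    have hwv : w ≠ v := fun h => (hS f hf).2 (h ▸ hw)
    simp [Function.update_of_ne hwv, Function.update_of_ne hwu]
  have upd_u : ∀ (x : U → V) (c d : V),
      Function.update (Function.update x u c) v d u = c := by
    intro x c d; simp [Function.update_of_ne huv]
  have upd_v : ∀ (x : U → V) (c d : V),
      Function.update (Function.update x u c) v d v = d := by
    intro x c d; simp
  refine Finset.card_bij'
    (fun x _ => Function.update (Function.update x u a') v b')
    (fun y _ => Function.update (Function.update y u a) v b) ?_ ?_ ?_ ?_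
  · intro x hx
    rw [mem_filter] at hx ⊢
    refine ⟨upd_mem x hx.1 a' ha' b' hb', fun f hf => (upd_ok x a' b' f hf).2 (hx.2.1 f hf),
      upd_u x a' b', upd_v x a' b'⟩
  · intro y hy
    rw [mem_filter] at hy ⊢
    refine ⟨upd_mem y hy.1 a ha b hb, fun f hf => (upd_ok y a b f hf).2 (hy.2.1 f hf),
      upd_u y a b, upd_v y a b⟩
  · intro x hx
    rw [mem_filter] at hx
    funext w
    rcases eq_or_ne w v with rfl | hwv
    · simp [hx.2.2.2]
    rcases eq_or_ne w u with rfl | hwu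
    · simp [Function.update_of_ne huv, Function.update_of_ne hwv, hx.2.2.1]
    · simp [Function.update_of_ne hwv, Function.update_of_ne hwu]
  · intro y hy
    rw [mem_filter] at hy
    funext w
    rcases eq_or_ne w v with rfl | hwv
    · simp [hy.2.2.2]
    rcases eq_or_ne w u with rfl | hwu
    · simp [Function.update_of_ne huv, Function.update_of_ne hwv, hy.2.2.1]
    · simp [Function.update_of_ne hwv, Function.update_of_ne hwu]

lemma count_split (G : SimpleGraph V) (B : U → Finset V) {u v : U} (huv : u ≠ v)
    {S : Finset (Sym2 U)} (hS : ∀ f ∈ S, u ∉ f ∧ v ∉ f) (q : V → V → Prop) :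
    ((Fintype.piFinset B).filter fun x => (∀ f ∈ S, ok G x f) ∧ q (x u) (x v)).card
      * ((B u).card * (B v).card)
    = ((B u ×ˢ B v).filter fun ab => q ab.1 ab.2).card
      * ((Fintype.piFinset B).filter fun x => ∀ f ∈ S, ok G x f).card := by
  classical
  set c : V × V → ℕ := fun ab =>
    ((Fintype.piFinset B).filter fun x =>
      (∀ f ∈ S, ok G x f) ∧ x u = ab.1 ∧ x v = ab.2).card with hc
  have decomp : ∀ (r : V → V → Prop),
      ((Fintype.piFinset B).filter fun x => (∀ f ∈ S, ok G x f) ∧ r (x u) (x v)).card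
      = ∑ ab ∈ (B u ×ˢ B v).filter fun ab => r ab.1 ab.2, c ab := by
    intro r
    rw [Finset.card_eq_sum_card_fiberwise (f := fun x => (x u, x v))
      (t := (B u ×ˢ B v).filter fun ab => r ab.1 ab.2)]
    · refine Finset.sum_congr rfl fun ab hab => ?_
      rw [mem_filter, mem_product] at hab
      rw [hc]
      congr 1
      rw [Finset.filter_filter]
      apply Finset.filter_congr
      intro x hx
      constructor
      · rintro ⟨⟨h1, _⟩, h2⟩
        exact ⟨h1, congrArg Prod.fst h2, congrArg Prod.snd h2⟩
      · rintro ⟨h1, h2, h3⟩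
        refine ⟨⟨h1, ?_⟩, by rw [h2, h3]⟩
        rw [h2, h3]; exact hab.2
    · intro x hx
      rw [Finset.mem_coe, mem_filter] at hx
      rw [Finset.mem_coe, mem_filter, mem_product]
      rw [Fintype.mem_piFinset] at hx
      exact ⟨⟨hx.1 u, hx.1 v⟩, hx.2.2⟩
  have decompAll :
      ((Fintype.piFinset B).filter fun x => ∀ f ∈ S, ok G x f).card
      = ∑ ab ∈ B u ×ˢ B v, c ab := by
    have := decomp fun _ _ => True
    simpa using this
  rw [decomp q, decompAll]
  rcases (B u ×ˢ B v).eq_empty_or_nonempty with hemp | ⟨⟨a0, b0⟩, hab0⟩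
  · have h1 : ((B u ×ˢ B v).filter fun ab => q ab.1 ab.2) = ∅ :=
      Finset.subset_empty.1 (hemp ▸ Finset.filter_subset _ _)
    rw [h1, hemp]
    simp [← Finset.card_product, hemp]
  · rw [mem_product] at hab0
    have hconst : ∀ ab ∈ B u ×ˢ B v, c ab = c (a0, b0) := by
      rintro ⟨a, b⟩ hab
      rw [mem_product] at hab
      exact fiber_const G B huv hS hab.1 hab0.1 hab.2 hab0.2
    rw [Finset.sum_congr rfl hconst,
      Finset.sum_congr rfl fun ab hab => hconst ab ((Finset.filter_subset _ _) hab)]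
    rw [Finset.sum_const, Finset.sum_const, smul_eq_mul, smul_eq_mul, Finset.card_product]
    ring

noncomputable def cnt (G : SimpleGraph V) (B : U → Finset V) (S : Finset (Sym2 U)) : ℕ :=
  ((Fintype.piFinset B).filter fun x => ∀ f ∈ S, ok G x f).card

noncomputable def bad (G : SimpleGraph V) (B : U → Finset V) (S : Finset (Sym2 U))
    (e : Sym2 U) : ℕ :=
  ((Fintype.piFinset B).filter fun x => (∀ f ∈ S, ok G x f) ∧ ¬ ok G x e).card

variable (G : SimpleGraph V) (B : U → Finset V)

lemma cnt_insert (S : Finset (Sym2 U)) (e : Sym2 U) :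
    cnt G B (insert e S) + bad G B S e = cnt G B S := by
  classical
  have h1 : cnt G B (insert e S)
      = (((Fintype.piFinset B).filter fun x => ∀ f ∈ S, ok G x f).filter
          fun x => ok G x e).card := by
    unfold cnt
    rw [Finset.filter_filter]
    congr 1
    apply Finset.filter_congr
    intro x _
    simp only [Finset.forall_mem_insert]
    tauto
  have h2 : bad G B S e
      = (((Fintype.piFinset B).filter fun x => ∀ f ∈ S, ok G x f).filter
          fun x => ¬ ok G x e).card := by
    unfold bad
    rw [Finset.filter_filter]
  rw [h1, h2]
  exact Finset.card_filter_add_card_filter_not _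

lemma bad_mono {S S' : Finset (Sym2 U)} (h : S' ⊆ S) (e : Sym2 U) :
    bad G B S e ≤ bad G B S' e := by
  apply Finset.card_le_card
  intro x hx
  rw [mem_filter] at hx ⊢
  exact ⟨hx.1, fun f hf => hx.2.1 f (h hf), hx.2.2⟩

lemma cnt_union_bound (S S₁ S₂ : Finset (Sym2 U)) (hsplit : ∀ f ∈ S, f ∈ S₁ ∨ f ∈ S₂)
    (hS₂ : S₂ ⊆ S) :
    cnt G B S₂ ≤ cnt G B S + ∑ f ∈ S₁, bad G B S₂ f := by
  classical
  have hsub : (Fintype.piFinset B).filter (fun x => ∀ f ∈ S₂, ok G x f)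
      ⊆ ((Fintype.piFinset B).filter fun x => ∀ f ∈ S, ok G x f)
        ∪ S₁.biUnion fun f =>
            (Fintype.piFinset B).filter fun x => (∀ g ∈ S₂, ok G x g) ∧ ¬ ok G x f := by
    intro x hx
    rw [mem_filter] at hx
    by_cases hall : ∀ f ∈ S₁, ok G x f
    · apply Finset.mem_union_left
      rw [mem_filter]
      refine ⟨hx.1, fun f hf => ?_⟩
      rcases hsplit f hf with hm | hm
      · exact hall f hm
      · exact hx.2 f hm
    · push_neg at hall
      obtain ⟨f, hf1, hf2⟩ := hall
      apply Finset.mem_union_right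
      exact Finset.mem_biUnion.2 ⟨f, hf1, mem_filter.2 ⟨hx.1, hx.2, hf2⟩⟩
  calc cnt G B S₂ ≤ (((Fintype.piFinset B).filter fun x => ∀ f ∈ S, ok G x f)
        ∪ S₁.biUnion fun f =>
            (Fintype.piFinset B).filter fun x => (∀ g ∈ S₂, ok G x g) ∧ ¬ ok G x f).card :=
      Finset.card_le_card hsub
    _ ≤ cnt G B S + ∑ f ∈ S₁, bad G B S₂ f := by
      refine (Finset.card_union_le _ _).trans ?_
      exact Nat.add_le_add le_rfl (Finset.card_biUnion_le)


noncomputable def badQ (G : SimpleGraph V) (s t : Finset V) : ℕ :=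
  ((s ×ˢ t).filter fun ab => ¬ G.Adj ab.1 ab.2).card

lemma bad_est {u v : U} (huv : u ≠ v)
    {S₂ : Finset (Sym2 U)} (hS₂ : ∀ f ∈ S₂, u ∉ f ∧ v ∉ f) :
    bad G B S₂ s(u, v) * ((B u).card * (B v).card)
      = badQ G (B u) (B v) * cnt G B S₂ := by
  unfold badQ
  have h : bad G B S₂ s(u, v)
      = ((Fintype.piFinset B).filter fun x =>
          (∀ f ∈ S₂, ok G x f) ∧ ¬ G.Adj (x u) (x v)).card := by
    refine congrArg Finset.card (Finset.filter_congr fun x _ => ?_)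
    rw [ok_mk]
  rw [h]
  convert count_split G B huv hS₂ fun a b => ¬ G.Adj a b using 4
  rfl

end Stmt14Aux

set_option maxHeartbeats 3200000 in
/-- Lovász Local Lemma application. Given pairwise disjoint blocks
`B(u)` of size `T'` in `Γ` with at least `T'² − T' − 4T'^(2−1/(2k))` good edges between
`B(u)` and `B(v)` for every edge `uv` of `H`, and `40(Δ_H+1)·T'^(−1/(2k)) ≤ 1`, one can
pick `x_u ∈ B(u)` so that every edge of `H` is realised by a good edge; in particular
`Γ` contains a copy of `H` using only good edges. -/
theorem stmt14 {U V : Type*} [Fintype U] [Fintype V] [DecidableEq V]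
    (H : SimpleGraph U) (Γ Good : SimpleGraph V) (hGood : Good ≤ Γ)
    [DecidableRel Good.Adj]
    (D k T' : ℕ) (hk : 1 ≤ k) (hT' : 1 ≤ T')
    (hdeg : ∀ u, H.degree u ≤ D)
    (B : U → Finset V)
    (hBdisj : ∀ u v, u ≠ v → Disjoint (B u) (B v))
    (hBcard : ∀ u, (B u).card = T')
    (hgood : ∀ u v, H.Adj u v →
      (T' : ℝ) ^ 2 - T' - 4 * (T' : ℝ) ^ ((2 : ℝ) - 1 / (2 * k)) ≤
        ((Rel.interedges Good.Adj (B u) (B v)).card : ℝ))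
    (hLLL : 40 * ((D : ℝ) + 1) * (T' : ℝ) ^ (-(1 : ℝ) / (2 * k)) ≤ 1) :
    ∃ x : U → V, (∀ u, x u ∈ B u) ∧
      ∀ u v, H.Adj u v → Good.Adj (x u) (x v) := by
  classical
  -- numeric preliminaries
  have hT0 : (0 : ℝ) < T' := by exact_mod_cast hT'
  have hT1 : (1 : ℝ) ≤ T' := by exact_mod_cast hT'
  have hD0 : (0 : ℝ) < (D : ℝ) + 1 := by positivity
  set pp : ℝ := (8 * ((D : ℝ) + 1))⁻¹ with hppdef
  have hpp0 : 0 < pp := by rw [hppdef]; positivity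
  have hpp8 : pp ≤ 1 / 8 := by
    have h8 : (8 : ℝ) ≤ 8 * ((D : ℝ) + 1) := by nlinarith [(Nat.cast_nonneg D : (0:ℝ) ≤ (D:ℝ))]
    have h9 := one_div_le_one_div_of_le (by norm_num : (0:ℝ) < 8) h8
    rw [hppdef, inv_eq_one_div]
    linarith [h9]
  -- the exponent bound
  have hrp0 : (0 : ℝ) ≤ (T' : ℝ) ^ (-(1 : ℝ) / (2 * k)) := Real.rpow_nonneg hT0.le _
  have hrp : 5 * (T' : ℝ) ^ (-(1 : ℝ) / (2 * k)) ≤ pp := by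
    rw [hppdef, inv_eq_one_div, le_div_iff₀ (by positivity)]
    nlinarith [hLLL]
  have hk1 : (1 : ℝ) ≤ (k : ℝ) := by exact_mod_cast hk
  have hexp : (1 : ℝ) ≤ (2 : ℝ) - 1 / (2 * (k : ℝ)) := by
    have h2k : (2 : ℝ) ≤ 2 * (k : ℝ) := by linarith
    have hd := one_div_le_one_div_of_le (by norm_num : (0:ℝ) < 2) h2k
    linarith
  have hT2 : (T' : ℝ) ≤ (T' : ℝ) ^ ((2 : ℝ) - 1 / (2 * (k : ℝ))) := by
    calc (T' : ℝ) = (T' : ℝ) ^ (1 : ℝ) := (Real.rpow_one _).symm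
    _ ≤ _ := Real.rpow_le_rpow_of_exponent_le hT1 hexp
  have hsplitpow : (T' : ℝ) ^ ((2 : ℝ) - 1 / (2 * (k : ℝ)))
      = (T' : ℝ) ^ 2 * (T' : ℝ) ^ (-(1 : ℝ) / (2 * (k : ℝ))) := by
    rw [show (2 : ℝ) - 1 / (2 * (k : ℝ)) = (2 : ℝ) + -(1 : ℝ) / (2 * (k : ℝ)) by ring,
      Real.rpow_add hT0]
    congr 1
    rw [← Real.rpow_natCast (T' : ℝ) 2]
    norm_num
  have hbadQ : ∀ u v : U, H.Adj u v →
      ((Stmt14Aux.badQ Good (B u) (B v) : ℝ)) ≤ pp * (T' : ℝ) ^ 2 := by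
    intro u v huv
    have hEq : Stmt14Aux.badQ Good (B u) (B v)
        = (Rel.interedges (fun a b => ¬ Good.Adj a b) (B u) (B v)).card := by
      unfold Stmt14Aux.badQ Rel.interedges
      congr!
    have hadd := Rel.card_interedges_add_card_interedges_compl Good.Adj (B u) (B v)
    rw [hBcard, hBcard] at hadd
    have hcast : ((Rel.interedges (fun a b => ¬ Good.Adj a b) (B u) (B v)).card : ℝ)
        = (T' : ℝ) * T' - ((Rel.interedges Good.Adj (B u) (B v)).card : ℝ) := by
      have h' : (((Rel.interedges Good.Adj (B u) (B v)).card : ℝ))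
          + ((Rel.interedges (fun a b => ¬ Good.Adj a b) (B u) (B v)).card : ℝ)
          = (T' : ℝ) * T' := by exact_mod_cast congrArg (Nat.cast : ℕ → ℝ) hadd
      linarith
    have hgd := hgood u v huv
    have h5 : 5 * ((T' : ℝ) ^ (-(1 : ℝ) / (2 * (k : ℝ)))) * (T' : ℝ) ^ 2 ≤ pp * (T' : ℝ) ^ 2 :=
      mul_le_mul_of_nonneg_right hrp (by positivity)
    rw [hEq]
    rw [hcast]
    nlinarith [hT2, hsplitpow, sq_nonneg ((T' : ℝ))]
  -- the key Local Lemma estimate, by strong induction on the size of `S`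
  have key : ∀ n (S : Finset (Sym2 U)), S ⊆ H.edgeFinset → S.card ≤ n →
      ∀ e ∈ H.edgeFinset,
        (Stmt14Aux.bad Good B S e : ℝ) ≤ 2 * pp * Stmt14Aux.cnt Good B S := by
    intro n
    induction n using Nat.strong_induction_on with
    | _ n ih =>
      intro S hSsub hScard e he
      induction e using Sym2.ind with
      | _ u v =>
        have huv : H.Adj u v := by
          rwa [SimpleGraph.mem_edgeFinset, SimpleGraph.mem_edgeSet] at he
        set S₁ := S.filter (fun f => u ∈ f ∨ v ∈ f) with hS1d
        set S₂ := S.filter (fun f => ¬ (u ∈ f ∨ v ∈ f)) with hS2d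
        have hS2sub : S₂ ⊆ S := Finset.filter_subset _ _
        have hS2prop : ∀ f ∈ S₂, u ∉ f ∧ v ∉ f := by
          intro f hf
          rw [hS2d, Finset.mem_filter] at hf
          push_neg at hf
          exact hf.2
        have hN2 : (0 : ℝ) ≤ (Stmt14Aux.cnt Good B S₂ : ℝ) := Nat.cast_nonneg _
        -- step estimate : Bad S₂ ≤ pp · cnt S₂
        have hest : (Stmt14Aux.bad Good B S₂ s(u, v) : ℝ) ≤ pp * Stmt14Aux.cnt Good B S₂ := by
          have hcs := Stmt14Aux.bad_est Good B huv.ne hS2prop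
          rw [hBcard, hBcard] at hcs
          have hq := hbadQ u v huv
          have hcsR : (Stmt14Aux.bad Good B S₂ s(u, v) : ℝ) * ((T' : ℝ) * T')
              = ((Stmt14Aux.badQ Good (B u) (B v)) : ℝ)
                * Stmt14Aux.cnt Good B S₂ := by exact_mod_cast congrArg (Nat.cast : ℕ → ℝ) hcs
          have hTT : (0 : ℝ) < (T' : ℝ) * T' := by positivity
          have h2 : (Stmt14Aux.bad Good B S₂ s(u, v) : ℝ) * ((T' : ℝ) * T')
              ≤ (pp * Stmt14Aux.cnt Good B S₂) * ((T' : ℝ) * T') := by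
            calc (Stmt14Aux.bad Good B S₂ s(u, v) : ℝ) * ((T' : ℝ) * T')
                = ((Stmt14Aux.badQ Good (B u) (B v)) : ℝ)
                  * Stmt14Aux.cnt Good B S₂ := hcsR
              _ ≤ (pp * (T' : ℝ) ^ 2) * Stmt14Aux.cnt Good B S₂ :=
                  mul_le_mul_of_nonneg_right hq hN2
              _ = (pp * Stmt14Aux.cnt Good B S₂) * ((T' : ℝ) * T') := by ring
          exact le_of_mul_le_mul_right h2 hTT
        -- cnt S₂ ≤ 2 cnt S
        have hN2le : (Stmt14Aux.cnt Good B S₂ : ℝ) ≤ 2 * Stmt14Aux.cnt Good B S := by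
          rcases S₁.eq_empty_or_nonempty with hS1e | ⟨f₀, hf₀⟩
          · have hSS : S₂ = S := by
              rw [hS2d]
              apply Finset.filter_true_of_mem
              intro f hf hm
              have : f ∈ S₁ := by rw [hS1d, Finset.mem_filter]; exact ⟨hf, hm⟩
              rw [hS1e] at this
              exact absurd this (Finset.notMem_empty f)
            rw [hSS]
            nlinarith [Nat.cast_nonneg (Stmt14Aux.cnt Good B S) (α := ℝ)]
          · have hf₀S : f₀ ∈ S := Finset.filter_subset _ _ hf₀
            have hf₀n : f₀ ∉ S₂ := by
              rw [hS2d, Finset.mem_filter]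
              rw [hS1d, Finset.mem_filter] at hf₀
              tauto
            have hcardlt : S₂.card < S.card :=
              Finset.card_lt_card ⟨hS2sub, fun hsub => hf₀n (hsub hf₀S)⟩
            have hbadf : ∀ f ∈ S₁, (Stmt14Aux.bad Good B S₂ f : ℝ)
                ≤ 2 * pp * Stmt14Aux.cnt Good B S₂ := by
              intro f hf
              exact ih S₂.card (lt_of_lt_of_le hcardlt hScard) S₂ (hS2sub.trans hSsub) le_rfl
                f (hSsub (Finset.filter_subset _ _ hf))
            -- card S₁ ≤ 2 D
            have hS1sub : S₁ ⊆ H.incidenceFinset u ∪ H.incidenceFinset v := by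
              intro f hf
              rw [hS1d, Finset.mem_filter] at hf
              have hef : f ∈ H.edgeSet := SimpleGraph.mem_edgeFinset.1 (hSsub hf.1)
              rcases hf.2 with h | h
              · exact Finset.mem_union_left _
                  ((SimpleGraph.mem_incidenceFinset (G := H) (v := u) f).2 ⟨hef, h⟩)
              · exact Finset.mem_union_right _
                  ((SimpleGraph.mem_incidenceFinset (G := H) (v := v) f).2 ⟨hef, h⟩)
            have hS1card : (S₁.card : ℝ) ≤ 2 * D := by
              have h1 : S₁.card ≤ D + D := by
                calc S₁.card ≤ (H.incidenceFinset u ∪ H.incidenceFinset v).card :=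
                    Finset.card_le_card hS1sub
                  _ ≤ (H.incidenceFinset u).card + (H.incidenceFinset v).card :=
                    Finset.card_union_le _ _
                  _ = H.degree u + H.degree v := by
                    rw [H.card_incidenceFinset_eq_degree, H.card_incidenceFinset_eq_degree]
                  _ ≤ D + D := Nat.add_le_add (hdeg u) (hdeg v)
              have := (Nat.cast_le (α := ℝ)).2 h1
              push_cast at this
              linarith
            have hsum : (∑ f ∈ S₁, (Stmt14Aux.bad Good B S₂ f : ℝ))
                ≤ (S₁.card : ℝ) * (2 * pp * Stmt14Aux.cnt Good B S₂) := by
              calc (∑ f ∈ S₁, (Stmt14Aux.bad Good B S₂ f : ℝ))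
                  ≤ ∑ _f ∈ S₁, 2 * pp * (Stmt14Aux.cnt Good B S₂ : ℝ) :=
                    Finset.sum_le_sum hbadf
                _ = (S₁.card : ℝ) * (2 * pp * Stmt14Aux.cnt Good B S₂) := by
                    rw [Finset.sum_const, nsmul_eq_mul]
            have hub := Stmt14Aux.cnt_union_bound Good B S S₁ S₂
              (fun f hf => by
                by_cases hm : u ∈ f ∨ v ∈ f
                · exact Or.inl (by rw [hS1d, Finset.mem_filter]; exact ⟨hf, hm⟩)
                · exact Or.inr (by rw [hS2d, Finset.mem_filter]; exact ⟨hf, hm⟩))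
              hS2sub
            have hubR : (Stmt14Aux.cnt Good B S₂ : ℝ)
                ≤ Stmt14Aux.cnt Good B S + ∑ f ∈ S₁, (Stmt14Aux.bad Good B S₂ f : ℝ) := by
              exact_mod_cast hub
            have hppe : pp * (8 * ((D : ℝ) + 1)) = 1 := by
              rw [hppdef]; field_simp
            nlinarith [hubR, hsum, hS1card, hpp0.le, hN2,
              mul_le_mul_of_nonneg_right hS1card (mul_nonneg (by positivity : (0:ℝ) ≤ 2 * pp) hN2)]
        have hmono : (Stmt14Aux.bad Good B S s(u, v) : ℝ)
            ≤ Stmt14Aux.bad Good B S₂ s(u, v) := by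
          exact_mod_cast Stmt14Aux.bad_mono Good B hS2sub _
        calc (Stmt14Aux.bad Good B S s(u, v) : ℝ)
            ≤ Stmt14Aux.bad Good B S₂ s(u, v) := hmono
          _ ≤ pp * Stmt14Aux.cnt Good B S₂ := hest
          _ ≤ pp * (2 * Stmt14Aux.cnt Good B S) := mul_le_mul_of_nonneg_left hN2le hpp0.le
          _ = 2 * pp * Stmt14Aux.cnt Good B S := by ring
  -- positivity by adding the edges one at a time
  have hNpos : ∀ S : Finset (Sym2 U), S ⊆ H.edgeFinset → 0 < Stmt14Aux.cnt Good B S := by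
    intro S
    induction S using Finset.induction_on with
    | empty =>
      intro _
      unfold Stmt14Aux.cnt
      rw [Finset.filter_true_of_mem (fun x _ => fun f hf => absurd hf (Finset.notMem_empty f))]
      rw [Fintype.card_piFinset]
      apply Finset.prod_pos
      intro u _
      rw [hBcard]
      exact hT'
    | @insert a S ha ih =>
      intro hsub
      have hS'sub : S ⊆ H.edgeFinset := fun f hf => hsub (Finset.mem_insert_of_mem hf)
      have hposS := ih hS'sub
      have hkey := key S.card S hS'sub le_rfl a (hsub (Finset.mem_insert_self a S))
      have hp := Stmt14Aux.cnt_insert Good B S a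
      have hcast : (Stmt14Aux.cnt Good B (insert a S) : ℝ)
          = Stmt14Aux.cnt Good B S - Stmt14Aux.bad Good B S a := by
        have := congrArg (Nat.cast : ℕ → ℝ) hp
        push_cast at this
        linarith
      have hposR : (0 : ℝ) < Stmt14Aux.cnt Good B S := by exact_mod_cast hposS
      have hfin : (0 : ℝ) < Stmt14Aux.cnt Good B (insert a S) := by
        nlinarith [mul_le_mul_of_nonneg_right hpp8 hposR.le]
      exact_mod_cast hfin
  have hfinal := hNpos H.edgeFinset Finset.Subset.rfl
  obtain ⟨x, hx⟩ := Finset.card_pos.mp hfinal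
  rw [Finset.mem_filter, Fintype.mem_piFinset] at hx
  refine ⟨x, fun u => hx.1 u, fun u v hadj => ?_⟩
  have he : s(u, v) ∈ H.edgeFinset := by
    rw [SimpleGraph.mem_edgeFinset, SimpleGraph.mem_edgeSet]
    exact hadj
  exact (Stmt14Aux.ok_mk Good x u v).1 (hx.2 _ he)
end
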